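/- arXiv:2110.07081 — 4 statements merged into one kernel-verified Lean document; each statement's English description precedes it below -/
import Mathlib

section
/- Let A be a C*-algebra and let a, b be positive elements of A. Then the following are equivalent: (i) a ≼_A b; (ii) (a − η)_+ ≼_A b for every η > 0; (iii) for every η > 0 there exists δ > 0 such that (a − η)_+ ≼_A (b − δ)_+. -/
/-- `a` is Cuntz subequivalent to `b` in `A`: for every `ε > 0` there is `y ∈ A` with
`‖y * b * y* - a‖ < ε`. -/
def CuntzLE {A : Type*} [NonUnitalNormedRing A] [StarRing A] (a b : A) : Prop :=
  ∀ ε > (0 : ℝ), ∃ y : A, ‖y * b * star y - a‖ < ε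

/-- `(a - ε)₊`, the image of `a` under the continuous functional calculus applied to
`t ↦ max (t - ε) 0`. -/
noncomputable def cutdown {A : Type*} [NonUnitalCStarAlgebra A] (a : A) (ε : ℝ) : A :=
  cfcₙ (fun t : ℝ => max (t - ε) 0) a

/-! Two estimates drive everything. If `0 ≤ a ≤ b`, then `y = a^{1/2} (b + δ)^{-1/2}`
satisfies `a - y b y* = δ y y*` with `‖y y*‖ ≤ 1`, so `a ≼ b`. Rørdam's lemma: if
`‖c - x‖ < ε`, then with `g(t) = ((t - ε)₊ / (t - ‖c - x‖))^{1/2}` one gets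
`(c - ε)₊ ≤ g(c) x g(c)`, hence `(c - ε)₊ ≼ x`.

(i) ⇒ (ii) is Rørdam's lemma for `x = y b y*`. (ii) ⇒ (i) because `‖(a - η)₊ - a‖ ≤ η` and
`≼` is closed in its first argument. (iii) ⇒ (ii) because `(b - δ)₊` is a conjugate of `b`.
For (ii) ⇒ (iii), a conjugator `y` witnessing `(a - η/2)₊ ≼ b` up to `η/4` also witnesses it
for `(b - δ)₊` when `δ ‖y‖²` is small, and Rørdam's lemma with `ε = η/2` gives
`(a - η)₊ = ((a - η/2)₊ - η/2)₊ ≼ (b - δ)₊`. -/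

section CuntzLE
variable {A : Type*} [NonUnitalNormedRing A] [StarRing A]

lemma cuntzLE_conj (y b : A) : CuntzLE (y * b * star y) b :=
  fun _ hε => ⟨y, by simpa using hε⟩

lemma CuntzLE.of_forall_norm_sub_lt {a b : A}
    (h : ∀ ε > (0 : ℝ), ∃ a', ‖a' - a‖ < ε ∧ CuntzLE a' b) : CuntzLE a b := by
  intro ε hε
  obtain ⟨a', ha', hab'⟩ := h (ε / 2) (by positivity)
  obtain ⟨y, hy⟩ := hab' (ε / 2) (by positivity)
  refine ⟨y, ?_⟩
  calc ‖y * b * star y - a‖ ≤ ‖y * b * star y - a'‖ + ‖a' - a‖ :=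
        norm_sub_le_norm_sub_add_norm_sub _ _ _
    _ < ε / 2 + ε / 2 := add_lt_add hy ha'
    _ = ε := add_halves ε

variable [NormedStarGroup A]

lemma norm_conj_sub_conj_le (y b c : A) :
    ‖y * b * star y - y * c * star y‖ ≤ ‖y‖ ^ 2 * ‖b - c‖ :=
  calc ‖y * b * star y - y * c * star y‖ = ‖y * (b - c) * star y‖ := by noncomm_ring
    _ ≤ ‖y‖ * ‖b - c‖ * ‖star y‖ := norm_mul₃_le
    _ = ‖y‖ ^ 2 * ‖b - c‖ := by rw [norm_star]; ring

lemma CuntzLE.conj {b c : A} (h : CuntzLE b c) (y : A) : CuntzLE (y * b * star y) c := by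
  intro ε hε
  obtain ⟨z, hz⟩ := h (ε / (‖y‖ ^ 2 + 1)) (by positivity)
  refine ⟨y * z, ?_⟩
  calc ‖y * z * c * star (y * z) - y * b * star y‖
      = ‖y * (z * c * star z) * star y - y * b * star y‖ := by
        rw [star_mul]; noncomm_ring
    _ ≤ ‖y‖ ^ 2 * ‖z * c * star z - b‖ := norm_conj_sub_conj_le _ _ _
    _ ≤ (‖y‖ ^ 2 + 1) * ‖z * c * star z - b‖ := by gcongr; linarith
    _ < (‖y‖ ^ 2 + 1) * (ε / (‖y‖ ^ 2 + 1)) := by gcongr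
    _ = ε := by field_simp

lemma CuntzLE.trans {a b c : A} (hab : CuntzLE a b) (hbc : CuntzLE b c) : CuntzLE a c :=
  .of_forall_norm_sub_lt fun ε hε =>
    let ⟨y, hy⟩ := hab ε hε
    ⟨y * b * star y, hy, hbc.conj y⟩

end CuntzLE

section cutdown
variable {A : Type*} [NonUnitalCStarAlgebra A]

lemma cfcₙ_mul_mul_cfcₙ (f : ℝ → ℝ) (a : A)
    (hf : ContinuousOn f (quasispectrum ℝ a) := by cfc_cont_tac)
    (hf0 : f 0 = 0 := by cfc_zero_tac)
    (ha : IsSelfAdjoint a := by cfc_tac) :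
    cfcₙ f a * a * cfcₙ f a = cfcₙ (fun t => f t * t * f t) a := by
  calc cfcₙ f a * a * cfcₙ f a = cfcₙ f a * cfcₙ (fun t : ℝ => t) a * cfcₙ f a := by
        rw [cfcₙ_id' ℝ a]
    _ = cfcₙ (fun t => f t * t * f t) a := by
        rw [← cfcₙ_mul f _ a, ← cfcₙ_mul (fun t => f t * t) f a (hf.mul continuousOn_id)
          (by simp [hf0])]

lemma cutdown_eq_conj {b : A} {δ : ℝ} (hb : IsSelfAdjoint b) (hδ : 0 < δ) :
    ∃ w : A, w * b * star w = cutdown b δ := by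
  set g : ℝ → ℝ := fun t => √(max (t - δ) 0 / max t δ)
  have hg : Continuous g :=
    Real.continuous_sqrt.comp <| Continuous.div (by fun_prop) (by fun_prop)
      fun t => (hδ.trans_le (le_max_right t δ)).ne'
  have hg0 : g 0 = 0 := by simp [g, hδ.le]
  refine ⟨cfcₙ g b, ?_⟩
  rw [(cfcₙ_predicate g b).star_eq, cfcₙ_mul_mul_cfcₙ g b hg.continuousOn hg0, cutdown]
  refine cfcₙ_congr fun t _ => ?_
  have hmax : 0 < max t δ := hδ.trans_le (le_max_right t δ)
  rw [mul_right_comm, Real.mul_self_sqrt (by positivity)]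
  rcases le_or_gt t δ with ht | ht
  · simp [sub_nonpos.mpr ht]
  · rw [max_eq_left ht.le, max_eq_left (by linarith)]
    field_simp [(hδ.trans ht).ne']

lemma cutdown_cutdown {a : A} {η δ : ℝ} (ha : IsSelfAdjoint a) (hη : 0 ≤ η) (hδ : 0 ≤ δ) :
    cutdown (cutdown a η) δ = cutdown a (η + δ) := by
  rw [cutdown, cutdown, ← cfcₙ_comp (fun t : ℝ => max (t - δ) 0) (fun t : ℝ => max (t - η) 0)
    a (by fun_prop) (by simp [hδ]) (by fun_prop) (by simp [hη])]
  refine cfcₙ_congr fun t _ => ?_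
  simp only [Function.comp_apply]
  rcases le_total (t - η) 0 with h | h
  · rw [max_eq_right h, max_eq_right (by linarith), max_eq_right (by linarith)]
  · rw [max_eq_left h, sub_sub]

variable [PartialOrder A] [StarOrderedRing A]

lemma cutdown_nonneg (a : A) (ε : ℝ) : 0 ≤ cutdown a ε :=
  cfcₙ_nonneg fun _ _ => le_max_right _ _

lemma norm_cutdown_sub_le {a : A} {ε : ℝ} (ha : 0 ≤ a) (hε : 0 ≤ ε) :
    ‖cutdown a ε - a‖ ≤ ε := by
  nth_rewrite 2 [← cfcₙ_id' ℝ a]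
  rw [cutdown, ← cfcₙ_sub _ _ a (by fun_prop) (by simp [hε])]
  refine norm_cfcₙ_le fun t ht => ?_
  have ht0 : 0 ≤ t := quasispectrum_nonneg_of_nonneg a ha t ht
  rw [Real.norm_eq_abs, abs_le]
  constructor <;> cases max_cases (t - ε) 0 <;> linarith

end cutdown

section unital
variable {B : Type*} [CStarAlgebra B] [PartialOrder B] [StarOrderedRing B]

lemma norm_sub_conj_le_of_le {a b s r : B} {δ : ℝ} (hδ : 0 ≤ δ) (hab : a ≤ b)
    (hs : IsSelfAdjoint s) (hss : s * s = a) (hr : IsSelfAdjoint r)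
    (hrr : r * (b + algebraMap ℝ B δ) * r = 1) :
    ‖a - s * r * b * star (s * r)‖ ≤ δ := by
  have hdiff : a - s * r * b * star (s * r) = δ • (s * r * star (s * r)) := by
    rw [Algebra.algebraMap_eq_smul_one] at hrr
    simp only [star_mul, hs.star_eq, hr.star_eq]
    rw [← hss]
    calc s * s - s * r * b * (r * s)
        = s * (r * (b + δ • 1) * r) * s - s * r * b * (r * s) := by rw [hrr, mul_one]
      _ = δ • (s * r * (r * s)) := by noncomm_ring
  have ha : 0 ≤ a := hss ▸ hs.mul_self_nonneg
  have hab' : a ≤ b + algebraMap ℝ B δ :=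
    hab.trans (le_add_of_nonneg_right (algebraMap_nonneg B hδ))
  have hnorm : ‖star (s * r) * (s * r)‖ ≤ 1 := by
    have : star (s * r) * (s * r) = star r * a * r := by
      simp only [star_mul, hs.star_eq, ← hss]; noncomm_ring
    rw [this]
    calc ‖star r * a * r‖ ≤ ‖star r * (b + algebraMap ℝ B δ) * r‖ :=
          CStarAlgebra.norm_le_norm_of_nonneg_of_le (star_left_conjugate_nonneg ha r)
            (star_left_conjugate_le_conjugate hab' r)
      _ ≤ 1 := by
          rw [hr.star_eq, hrr]
          rcases subsingleton_or_nontrivial B with _ | _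
          · simp [Subsingleton.elim (1 : B) 0]
          · simp
  rw [hdiff, norm_smul, Real.norm_of_nonneg hδ, CStarRing.norm_self_mul_star,
    ← CStarRing.norm_star_mul_self]
  exact mul_le_of_le_one_right hδ hnorm

lemma exists_isSelfAdjoint_mul_add_algebraMap_mul_eq_one {b : B} {δ : ℝ} (hb : 0 ≤ b)
    (hδ : 0 < δ) : ∃ r : B, IsSelfAdjoint r ∧ r * (b + algebraMap ℝ B δ) * r = 1 := by
  have hpos : ∀ t ∈ spectrum ℝ b, 0 < t + δ := fun t ht =>
    add_pos_of_nonneg_of_pos (spectrum_nonneg_of_nonneg hb ht) hδ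
  have hcont : ContinuousOn (fun t : ℝ => (√(t + δ))⁻¹) (spectrum ℝ b) :=
    ContinuousOn.inv₀ (by fun_prop) fun t ht => (Real.sqrt_pos.mpr (hpos t ht)).ne'
  refine ⟨cfc (fun t : ℝ => (√(t + δ))⁻¹) b, cfc_predicate _ b, ?_⟩
  have hshift : b + algebraMap ℝ B δ = cfc (fun t : ℝ => t + δ) b := by
    rw [cfc_add_const δ (fun t : ℝ => t) b, cfc_id' ℝ b]
  rw [hshift, ← cfc_mul _ _ b hcont, ← cfc_mul (fun t : ℝ => (√(t + δ))⁻¹ * (t + δ)) _ b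
    (hcont.mul (by fun_prop)) hcont, ← cfc_one ℝ b]
  refine cfc_congr fun t ht => ?_
  have hne := (Real.sqrt_pos.mpr (hpos t ht)).ne'
  simp only [Pi.one_apply]
  field_simp
  exact (Real.sq_sqrt (hpos t ht).le).symm

end unital

lemma Unitization.exists_inr_eq_inr_mul {R A : Type*} [CommSemiring R] [NonUnitalSemiring A]
    [Module R A] [IsScalarTower R A A] [SMulCommClass R A A] (a : A) (x : Unitization R A) :
    ∃ y : A, (y : Unitization R A) = a * x := by
  refine ⟨x.fst • a + a * x.snd, ?_⟩
  conv_rhs => rw [← x.inl_fst_add_inr_snd_eq]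
  rw [mul_add, Unitization.inr_mul_inl, Unitization.inr_add, Unitization.inr_mul]

section order
variable {A : Type*} [NonUnitalCStarAlgebra A] [PartialOrder A] [StarOrderedRing A]

-- `(b + ε/2)^{-1/2}` lives only in the unitization, but `a^{1/2} (b + ε/2)^{-1/2}` lies in `A`.
open Unitization in
lemma cuntzLE_of_le {a b : A} (ha : 0 ≤ a) (hab : a ≤ b) : CuntzLE a b := by
  have hb : 0 ≤ b := ha.trans hab
  intro ε hε
  obtain ⟨r, hr, hrr⟩ := exists_isSelfAdjoint_mul_add_algebraMap_mul_eq_one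
    (inr_nonneg_iff.mpr hb : (0 : Unitization ℂ A) ≤ b) (half_pos hε)
  obtain ⟨y, hy⟩ := exists_inr_eq_inr_mul (CFC.sqrt a) r
  refine ⟨y, ?_⟩
  have hss : ((CFC.sqrt a : A) : Unitization ℂ A) * (CFC.sqrt a : A) = a := by
    rw [← inr_mul, CFC.sqrt_mul_sqrt_self a ha]
  rw [norm_sub_rev, ← norm_inr (𝕜 := ℂ)]
  push_cast
  rw [hy]
  exact (norm_sub_conj_le_of_le (half_pos hε).le ((inr_le_iff a b).mpr hab)
    ((CFC.sqrt_nonneg a).isSelfAdjoint.inr ℂ) hss hr hrr).trans_lt (half_lt_self hε)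

lemma exists_cutdown_le_conj_of_norm_sub_lt {c x : A} {ε : ℝ} (hc : IsSelfAdjoint c)
    (hx : IsSelfAdjoint x) (hcx : ‖c - x‖ < ε) : ∃ g : A, cutdown c ε ≤ g * x * star g := by
  set ε' := ‖c - x‖
  have hε : 0 < ε := (norm_nonneg _).trans_lt hcx
  have hd : ∀ t, 0 < max t ε - ε' := fun t => by linarith [le_max_right t ε]
  set φ : ℝ → ℝ := fun t => max (t - ε) 0 / (max t ε - ε')
  have hφ : Continuous φ := Continuous.div (by fun_prop) (by fun_prop) fun t => (hd t).ne'
  have hφ_nonneg : ∀ t, 0 ≤ φ t := fun t => div_nonneg (le_max_right _ _) (hd t).le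
  -- `φ t * (t - ε') = (t - ε)₊`: conjugating by `√φ(c)` turns `c - ε'` into `(c - ε)₊`
  have hφ_mul : ∀ t, φ t * t = max (t - ε) 0 + ε' * φ t := fun t => by
    rcases le_or_gt t ε with ht | ht
    · simp [φ, sub_nonpos.mpr ht]
    · have : max t ε - ε' ≠ 0 := (hd t).ne'
      simp only [φ, max_eq_left ht.le, max_eq_left (sub_pos.mpr ht).le] at this ⊢
      field_simp
      ring
  set g : ℝ → ℝ := fun t => √(φ t)
  have hg : Continuous g := Real.continuous_sqrt.comp hφ
  have hg0 : g 0 = 0 := by simp [g, φ, hε.le]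
  have hgg : ∀ t, g t * g t = φ t := fun t => Real.mul_self_sqrt (hφ_nonneg t)
  set G := cfcₙ g c
  have hG : IsSelfAdjoint G := cfcₙ_predicate g c
  have hGcG : G * c * G = cutdown c ε + ε' • (G * G) := by
    rw [cfcₙ_mul_mul_cfcₙ g c hg.continuousOn hg0,
      ← cfcₙ_mul g g c hg.continuousOn hg0 hg.continuousOn hg0,
      ← cfcₙ_smul ε' (fun t => g t * g t) c (hg.mul hg).continuousOn (by simp [hg0]), cutdown,
      ← cfcₙ_add _ _ c (by fun_prop) (by simp [hε.le]) (by fun_prop) (by simp [hg0])]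
    refine cfcₙ_congr fun t _ => ?_
    simp only [smul_eq_mul, mul_right_comm _ t, hgg, hφ_mul]
  have hconj : G * (c - x) * G ≤ ε' • (G * G) := by
    simpa only [hG.star_eq] using CStarAlgebra.star_left_conjugate_le_norm_smul (a := G) (hc.sub hx)
  refine ⟨G, le_of_add_le_add_right (a := ε' • (G * G)) ?_⟩
  calc cutdown c ε + ε' • (G * G) = G * x * G + G * (c - x) * G := by rw [← hGcG]; noncomm_ring
    _ ≤ G * x * star G + ε' • (G * G) := by rw [hG.star_eq]; gcongr

lemma cuntzLE_cutdown_of_norm_sub_lt {c x : A} {ε : ℝ} (hc : IsSelfAdjoint c)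
    (hx : IsSelfAdjoint x) (hcx : ‖c - x‖ < ε) : CuntzLE (cutdown c ε) x :=
  let ⟨g, hg⟩ := exists_cutdown_le_conj_of_norm_sub_lt hc hx hcx
  (cuntzLE_of_le (cutdown_nonneg c ε) hg).trans (cuntzLE_conj g x)

lemma CuntzLE.exists_cutdown_cuntzLE_cutdown {c b : A} (h : CuntzLE c b) (hc : IsSelfAdjoint c)
    (hb : 0 ≤ b) {η : ℝ} (hη : 0 < η) : ∃ δ > 0, CuntzLE (cutdown c η) (cutdown b δ) := by
  obtain ⟨y, hy⟩ := h (η / 2) (half_pos hη)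
  set δ := η / 2 / (‖y‖ ^ 2 + 1)
  have hδ : 0 < δ := by positivity
  refine ⟨δ, hδ, ?_⟩
  have hclose : ‖y * cutdown b δ * star y - y * b * star y‖ ≤ η / 2 :=
    calc ‖y * cutdown b δ * star y - y * b * star y‖ ≤ ‖y‖ ^ 2 * ‖cutdown b δ - b‖ :=
          norm_conj_sub_conj_le _ _ _
      _ ≤ (‖y‖ ^ 2 + 1) * δ := by
          gcongr
          · linarith
          · exact norm_cutdown_sub_le hb hδ.le
      _ = η / 2 := by simp only [δ]; field_simp
  have hcx : ‖c - y * cutdown b δ * star y‖ < η :=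
    calc ‖c - y * cutdown b δ * star y‖
        ≤ ‖c - y * b * star y‖ + ‖y * b * star y - y * cutdown b δ * star y‖ :=
          norm_sub_le_norm_sub_add_norm_sub _ _ _
      _ < η / 2 + η / 2 := by
          rw [norm_sub_rev c, norm_sub_rev (y * b * star y) (y * cutdown b δ * star y)]
          exact add_lt_add_of_lt_of_le hy hclose
      _ = η := add_halves η
  exact (cuntzLE_cutdown_of_norm_sub_lt hc
    (IsSelfAdjoint.conjugate (cutdown_nonneg b δ).isSelfAdjoint y) hcx).trans (cuntzLE_conj y _)

end order

theorem stmt0 {A : Type*} [NonUnitalCStarAlgebra A] [PartialOrder A] [StarOrderedRing A]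
    (a b : A) (ha : 0 ≤ a) (hb : 0 ≤ b) :
    List.TFAE
      [CuntzLE a b,
       ∀ η > (0 : ℝ), CuntzLE (cutdown a η) b,
       ∀ η > (0 : ℝ), ∃ δ > (0 : ℝ), CuntzLE (cutdown a η) (cutdown b δ)] := by
  tfae_have 1 → 2 := fun hab η hη =>
    let ⟨y, hy⟩ := hab η hη
    (cuntzLE_cutdown_of_norm_sub_lt ha.isSelfAdjoint (hb.isSelfAdjoint.conjugate y)
      (by rwa [norm_sub_rev])).trans (cuntzLE_conj y b)
  tfae_have 2 → 1 := fun h => .of_forall_norm_sub_lt fun η hη =>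
    ⟨cutdown a (η / 2), (norm_cutdown_sub_le ha (half_pos hη).le).trans_lt (half_lt_self hη),
      h _ (half_pos hη)⟩
  tfae_have 2 → 3 := fun h η hη => by
    obtain ⟨δ, hδ, hcd⟩ := (h (η / 2) (half_pos hη)).exists_cutdown_cuntzLE_cutdown
      (cutdown_nonneg a _).isSelfAdjoint hb (half_pos hη)
    rw [cutdown_cutdown ha.isSelfAdjoint (half_pos hη).le (half_pos hη).le, add_halves] at hcd
    exact ⟨δ, hδ, hcd⟩
  tfae_have 3 → 2 := fun h η hη =>
    let ⟨δ, hδ, hcd⟩ := h η hη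
    let ⟨w, hw⟩ := cutdown_eq_conj hb.isSelfAdjoint hδ
    hcd.trans (hw ▸ cuntzLE_conj w b)
  tfae_finish
end

section
/- Let M ∈ (0, ∞) and let f : [0, M] → ℂ be a continuous function. Then for every ε > 0 there exists δ > 0 such that whenever A is a unital C*-algebra and x, z ∈ A satisfy 0 ≤ x ≤ M·1, ‖z‖ ≤ M, and ‖xz − zx‖ < δ, then ‖f(x)z − z f(x)‖ < ε, where f(x) denotes the image of x under the continuous functional calculus applied to f. -/
/-!
Approximate `f` uniformly on `[0, M] ⊇ σ(x)` by a polynomial `p`, so that `‖f(x) - p(x)‖` is small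
by the isometry of the functional calculus. The commutator of `z` with `p(x)` is controlled by
`‖xz - zx‖`, since `x ^ n z - z x ^ n = x (x ^ (n - 1) z - z x ^ (n - 1)) + (x z - z x) x ^ (n - 1)`,
with a constant depending only on `p` and `M`.
-/

open Polynomial Finset Set

theorem exists_complex_polynomial_near_of_continuousOn (a b : ℝ) (f : ℝ → ℂ)
    (hf : ContinuousOn f (Icc a b)) (ε : ℝ) (hε : 0 < ε) :
    ∃ p : ℂ[X], ∀ t ∈ Icc a b, ‖p.eval (t : ℂ) - f t‖ < ε := by
  obtain ⟨p, hp⟩ := exists_polynomial_near_of_continuousOn a b (fun t ↦ (f t).re)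
    (Complex.continuous_re.comp_continuousOn hf) (ε / 2) (half_pos hε)
  obtain ⟨q, hq⟩ := exists_polynomial_near_of_continuousOn a b (fun t ↦ (f t).im)
    (Complex.continuous_im.comp_continuousOn hf) (ε / 2) (half_pos hε)
  refine ⟨p.map Complex.ofRealHom + C Complex.I * q.map Complex.ofRealHom, fun t ht ↦ ?_⟩
  refine (Complex.norm_le_abs_re_add_abs_im _).trans_lt ?_
  have hev (r : ℝ[X]) : (r.map Complex.ofRealHom).eval (t : ℂ) = ((r.eval t : ℝ) : ℂ) := by
    rw [eval_map]; exact eval₂_at_apply Complex.ofRealHom t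
  have hre := hp t ht
  have him := hq t ht
  simp only [eval_add, hev, eval_mul, eval_C, Complex.sub_re, Complex.add_re, Complex.ofReal_re,
    Complex.mul_re, Complex.I_re, zero_mul, Complex.I_im, Complex.ofReal_im, mul_zero, sub_self,
    add_zero, Complex.sub_im, Complex.add_im, Complex.mul_im, one_mul, zero_add] at hre him ⊢
  linarith

section NormedRing

variable {A : Type*} [NormedRing A]

theorem norm_pow_mul_sub_mul_pow_le {x : A} {M : ℝ} (hx : ‖x‖ ≤ M) (z : A) (n : ℕ) :
    ‖x ^ n * z - z * x ^ n‖ ≤ n * M ^ (n - 1) * ‖x * z - z * x‖ := by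
  rcases n.eq_zero_or_pos with rfl | hn
  · simp
  induction n, hn using Nat.le_induction with
  | base => simp
  | succ n hn ih =>
    have hsplit : x ^ (n + 1) * z - z * x ^ (n + 1)
        = x * (x ^ n * z - z * x ^ n) + (x * z - z * x) * x ^ n := by
      rw [pow_succ']; noncomm_ring
    have hpow : ‖x ^ n‖ ≤ M ^ n :=
      (norm_pow_le' x hn).trans (pow_le_pow_left₀ (norm_nonneg x) hx n)
    calc ‖x ^ (n + 1) * z - z * x ^ (n + 1)‖
        ≤ ‖x‖ * ‖x ^ n * z - z * x ^ n‖ + ‖x * z - z * x‖ * ‖x ^ n‖ := by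
          rw [hsplit]
          exact (norm_add_le _ _).trans (add_le_add (norm_mul_le _ _) (norm_mul_le _ _))
      _ ≤ M * (n * M ^ (n - 1) * ‖x * z - z * x‖) + ‖x * z - z * x‖ * M ^ n := by
          have hM : 0 ≤ M := (norm_nonneg x).trans hx
          gcongr
      _ = (n + 1 : ℕ) * M ^ (n + 1 - 1) * ‖x * z - z * x‖ := by
          rw [Nat.add_sub_cancel, ← mul_pow_sub_one (Nat.pos_iff_ne_zero.mp hn) M]; push_cast; ring

theorem norm_aeval_mul_sub_mul_aeval_le {𝕜 : Type*} [NormedField 𝕜] [NormedAlgebra 𝕜 A]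
    (p : 𝕜[X]) {x : A} {M : ℝ} (hx : ‖x‖ ≤ M) (z : A) :
    ‖aeval x p * z - z * aeval x p‖ ≤
      (∑ i ∈ range (p.natDegree + 1), ‖p.coeff i‖ * (i * M ^ (i - 1))) * ‖x * z - z * x‖ := by
  rw [aeval_eq_sum_range, sum_mul, mul_sum, ← sum_sub_distrib, sum_mul]
  refine (norm_sum_le _ _).trans (sum_le_sum fun i _ ↦ ?_)
  rw [smul_mul_assoc, mul_smul_comm, ← smul_sub, mul_assoc]
  exact (norm_smul_le _ _).trans
    (mul_le_mul_of_nonneg_left (norm_pow_mul_sub_mul_pow_le hx z i) (norm_nonneg _))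

theorem norm_mul_sub_mul_le_add_norm_sub (a b z : A) :
    ‖a * z - z * a‖ ≤ 2 * ‖z‖ * ‖a - b‖ + ‖b * z - z * b‖ := by
  have hsplit : a * z - z * a = ((a - b) * z - z * (a - b)) + (b * z - z * b) := by noncomm_ring
  calc ‖a * z - z * a‖ ≤ ‖(a - b) * z - z * (a - b)‖ + ‖b * z - z * b‖ := by
        rw [hsplit]; exact norm_add_le _ _
    _ ≤ ‖a - b‖ * ‖z‖ + ‖z‖ * ‖a - b‖ + ‖b * z - z * b‖ := by
        gcongr
        exact (norm_sub_le _ _).trans (add_le_add (norm_mul_le _ _) (norm_mul_le _ _))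
    _ = 2 * ‖z‖ * ‖a - b‖ + ‖b * z - z * b‖ := by ring

end NormedRing

section CStarAlgebra

variable {A : Type*} [CStarAlgebra A] [PartialOrder A] [StarOrderedRing A]

theorem eq_re_and_re_mem_Icc_of_mem_spectrum {x : A} {M : ℝ} (hx₀ : 0 ≤ x)
    (hxM : x ≤ algebraMap ℝ A M) {w : ℂ} (hw : w ∈ spectrum ℂ x) :
    w = w.re ∧ w.re ∈ Icc 0 M := by
  have hx : IsSelfAdjoint x := .of_nonneg hx₀
  have hw_re : w = w.re := hx.mem_spectrum_eq_re hw
  have hwℝ : w.re ∈ spectrum ℝ x := spectrum.of_algebraMap_mem ℂ (hw_re ▸ hw)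
  exact ⟨hw_re, spectrum_nonneg_of_nonneg hx₀ hwℝ, (le_algebraMap_iff_spectrum_le hx).mp hxM _ hwℝ⟩

theorem norm_cfc_sub_aeval_le {x : A} {M : ℝ} (hx₀ : 0 ≤ x) (hxM : x ≤ algebraMap ℝ A M)
    {f : ℝ → ℂ} (hf : ContinuousOn f (Icc 0 M)) (p : ℂ[X]) {η : ℝ} (hη : 0 ≤ η)
    (hp : ∀ t ∈ Icc 0 M, ‖p.eval (t : ℂ) - f t‖ ≤ η) :
    ‖cfc (fun w : ℂ ↦ f w.re) x - aeval x p‖ ≤ η := by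
  have hspec := fun w (hw : w ∈ spectrum ℂ x) ↦ eq_re_and_re_mem_Icc_of_mem_spectrum hx₀ hxM hw
  have hcont : ContinuousOn (fun w : ℂ ↦ f w.re) (spectrum ℂ x) :=
    hf.comp Complex.continuous_re.continuousOn fun w hw ↦ (hspec w hw).2
  rw [← cfc_polynomial p x, ← cfc_sub _ _ x]
  refine norm_cfc_le hη fun w hw ↦ ?_
  obtain ⟨hw_re, hw_mem⟩ := hspec w hw
  rw [norm_sub_rev]
  nth_rw 1 [hw_re]
  exact hp _ hw_mem

end CStarAlgebra

theorem stmt5 (M : ℝ) (hM : 0 < M) (f : ℝ → ℂ) (hf : ContinuousOn f (Set.Icc 0 M))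
    (ε : ℝ) (hε : 0 < ε) :
    ∃ δ > (0 : ℝ), ∀ (A : Type) [CStarAlgebra A] [PartialOrder A] [StarOrderedRing A],
      ∀ x z : A, 0 ≤ x → x ≤ M • (1 : A) → ‖z‖ ≤ M → ‖x * z - z * x‖ < δ →
        ‖cfc (fun w : ℂ => f w.re) x * z - z * cfc (fun w : ℂ => f w.re) x‖ < ε := by
  set η := ε / 4 / (M + 1) with hη
  obtain ⟨p, hp⟩ := exists_complex_polynomial_near_of_continuousOn 0 M f hf η (by positivity)
  set C := ∑ i ∈ range (p.natDegree + 1), ‖p.coeff i‖ * (i * M ^ (i - 1))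
  have hC : 0 ≤ C := sum_nonneg fun i _ ↦ by positivity
  refine ⟨ε / 2 / (C + 1), by positivity, fun A _ _ _ x z hx₀ hxM hz hxz ↦ ?_⟩
  rw [← Algebra.algebraMap_eq_smul_one] at hxM
  have hxM' : ‖x‖ ≤ M := (CStarAlgebra.norm_le_iff_le_algebraMap x hM.le hx₀).mpr hxM
  have happrox := norm_cfc_sub_aeval_le hx₀ hxM hf p (by positivity) fun t ht ↦ (hp t ht).le
  have hcomm := norm_aeval_mul_sub_mul_aeval_le p hxM' z
  have hfrac (a : ℝ) (ha : 0 ≤ a) : a / (a + 1) * (ε / 2) < ε / 2 :=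
    mul_lt_of_lt_one_left (half_pos hε) ((div_lt_one (by positivity)).2 (lt_add_one a))
  have h₁ : 2 * ‖z‖ * ‖cfc (fun w : ℂ ↦ f w.re) x - aeval x p‖ < ε / 2 :=
    calc _ ≤ 2 * M * η := by gcongr
      _ = M / (M + 1) * (ε / 2) := by rw [hη]; ring
      _ < ε / 2 := hfrac M hM.le
  have h₂ : C * ‖x * z - z * x‖ < ε / 2 :=
    calc _ ≤ C * (ε / 2 / (C + 1)) := by gcongr
      _ = C / (C + 1) * (ε / 2) := by ring
      _ < ε / 2 := hfrac C hC
  linarith [norm_mul_sub_mul_le_add_norm_sub (cfc (fun w : ℂ ↦ f w.re) x) (aeval x p) z]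
end

section
/- Let f : [0, 1] → ℂ be a continuous function such that f(1) = 1. Then for every ε > 0 there exists δ > 0 such that whenever A is a unital C*-algebra and a, x ∈ A are positive elements satisfying ‖a‖ ≤ 1, ‖x‖ ≤ 1, and ‖a x a‖ > 1 − δ, then ‖f(a) x f(a)‖ > 1 − ε, where f(a) denotes the image of a under the continuous functional calculus applied to f. -/
/-
Pick `t < 1` with `f ≈ 1` on `[t, 1]` and put `b = h(a)` with `h = √(ramp t)`, which vanishes on
`[0, t]` and has `h 1 = 1`. Since `s² ≤ t² + (1 - t²) h(s)²` on `[0, 1]`, conjugating by `√x`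
gives `‖a x a‖ ≤ t² + (1 - t²) ‖b x b‖`, so `‖b x b‖` is close to `1` when `‖a x a‖` is.
As `h (f - 1)` is uniformly small on the spectrum of `a`, `b f(a) = f(a) b ≈ b`, and since
`‖b‖ ≤ 1` this bounds `‖b x b‖` by `‖f(a) x f(a)‖` plus a small error.
-/

open Set Filter Topology

lemma exists_Ico_forall_dist_lt_of_continuousWithinAt {E : Type*} [PseudoMetricSpace E]
    {f : ℝ → E} {a b : ℝ} (hab : a < b) (hf : ContinuousWithinAt f (Icc a b) b) {η : ℝ}
    (hη : 0 < η) : ∃ t ∈ Ico a b, ∀ s ∈ Icc t b, dist (f s) (f b) < η := by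
  have h : ∀ᶠ s in 𝓝[≤] b, dist (f s) (f b) < η := by
    rw [← nhdsWithin_Icc_eq_nhdsLE hab]
    exact Metric.tendsto_nhds.mp hf η hη
  obtain ⟨l, hl, hsub⟩ := mem_nhdsLE_iff_exists_Icc_subset.mp h
  exact ⟨max a l, ⟨le_max_left _ _, max_lt hab hl⟩,
    fun s hs => hsub ⟨(le_max_right _ _).trans hs.1, hs.2⟩⟩

lemma IsSelfAdjoint.norm_mul_mul_self_mul_comm {A : Type*} [NonUnitalNormedRing A] [StarRing A]
    [CStarRing A] {c d : A} (hc : IsSelfAdjoint c) (hd : IsSelfAdjoint d) :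
    ‖c * (d * d) * c‖ = ‖d * (c * c) * d‖ := by
  have h₁ : c * (d * d) * c = star (d * c) * (d * c) := by
    rw [star_mul, hc.star_eq, hd.star_eq]; noncomm_ring
  have h₂ : d * (c * c) * d = (d * c) * star (d * c) := by
    rw [star_mul, hc.star_eq, hd.star_eq]; noncomm_ring
  rw [h₁, h₂, CStarRing.norm_star_mul_self, CStarRing.norm_self_mul_star]

lemma Commute.norm_mul_mul_le_of_norm_mul_sub_le {R : Type*} [NonUnitalNormedRing R]
    {b c x : R} {η : ℝ} (hbc : Commute b c) (hb : ‖b‖ ≤ 1) (hx : ‖x‖ ≤ 1)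
    (h : ‖b * c - b‖ ≤ η) :
    ‖b * x * b‖ ≤ ‖c * x * c‖ + η * (2 + η) := by
  have hη : 0 ≤ η := (norm_nonneg _).trans h
  have hcb : ‖c * b‖ ≤ 1 + η :=
    calc ‖c * b‖ = ‖(b * c - b) + b‖ := by rw [hbc.eq, sub_add_cancel]
      _ ≤ η + 1 := (norm_add_le _ _).trans (add_le_add h hb)
      _ = 1 + η := add_comm η 1
  have e₁ : ‖b * (c * x * c) * b‖ ≤ ‖c * x * c‖ :=
    calc ‖b * (c * x * c) * b‖ ≤ ‖b‖ * ‖c * x * c‖ * ‖b‖ := norm_mul₃_le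
      _ ≤ 1 * ‖c * x * c‖ * 1 := by gcongr
      _ = ‖c * x * c‖ := by ring
  have e₂ : ‖(b * c - b) * x * (c * b)‖ ≤ η * (1 + η) :=
    calc ‖(b * c - b) * x * (c * b)‖ ≤ ‖b * c - b‖ * ‖x‖ * ‖c * b‖ := norm_mul₃_le
      _ ≤ η * 1 * (1 + η) := by gcongr
      _ = η * (1 + η) := by ring
  have e₃ : ‖b * x * (c * b - b)‖ ≤ η :=
    calc ‖b * x * (c * b - b)‖ ≤ ‖b‖ * ‖x‖ * ‖c * b - b‖ := norm_mul₃_le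
      _ ≤ 1 * 1 * η := by rw [← hbc.eq]; gcongr
      _ = η := by ring
  have hdecomp : b * x * b =
      b * (c * x * c) * b - (b * c - b) * x * (c * b) - b * x * (c * b - b) := by
    noncomm_ring
  calc ‖b * x * b‖ ≤ ‖b * (c * x * c) * b‖ + ‖(b * c - b) * x * (c * b)‖
        + ‖b * x * (c * b - b)‖ := by
        rw [hdecomp]; exact (norm_sub_le _ _).trans (by gcongr; exact norm_sub_le _ _)
    _ ≤ ‖c * x * c‖ + η * (2 + η) := by nlinarith

lemma norm_mul_mul_le_of_mul_self_le {A : Type*} [CStarAlgebra A] [PartialOrder A]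
    [StarOrderedRing A] {a b x : A} {r : ℝ} (ha : IsSelfAdjoint a) (hb : IsSelfAdjoint b)
    (hx : 0 ≤ x) (hx₁ : ‖x‖ ≤ 1) (hr₀ : 0 ≤ r) (hr₁ : r ≤ 1)
    (hab : a * a ≤ algebraMap ℝ A r + (1 - r) • (b * b)) :
    ‖a * x * a‖ ≤ r + (1 - r) * ‖b * x * b‖ := by
  set s := CFC.sqrt x
  have hs : IsSelfAdjoint s := (CFC.sqrt_nonneg x).isSelfAdjoint
  have hss : s * s = x := CFC.sqrt_mul_sqrt_self x hx
  have hconj : s * (a * a) * s ≤ r • x + (1 - r) • (s * (b * b) * s) := by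
    have h := star_left_conjugate_le_conjugate hab s
    rwa [hs.star_eq, Algebra.algebraMap_eq_smul_one, mul_add, add_mul, mul_smul_comm,
      smul_mul_assoc, mul_one, hss, mul_smul_comm, smul_mul_assoc] at h
  have hnonneg : 0 ≤ s * (a * a) * s := by
    simpa [hs.star_eq, ha.star_eq] using star_left_conjugate_nonneg (star_mul_self_nonneg a) s
  calc ‖a * x * a‖ = ‖s * (a * a) * s‖ := by rw [← hss, ha.norm_mul_mul_self_mul_comm hs]
    _ ≤ ‖r • x + (1 - r) • (s * (b * b) * s)‖ :=
        CStarAlgebra.norm_le_norm_of_nonneg_of_le hnonneg hconj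
    _ ≤ r * ‖x‖ + (1 - r) * ‖s * (b * b) * s‖ := by
        refine (norm_add_le _ _).trans ?_
        rw [norm_smul, norm_smul, Real.norm_of_nonneg hr₀, Real.norm_of_nonneg (by linarith)]
    _ ≤ r + (1 - r) * ‖b * x * b‖ := by
        rw [hs.norm_mul_mul_self_mul_comm hb, hss]
        gcongr
        exact mul_le_of_le_one_right hr₀ hx₁

lemma norm_cfc_mul_cfc_sub_cfc_le {𝕜 A : Type*} {p : A → Prop} [RCLike 𝕜] [NormedRing A]
    [StarRing A] [NormedAlgebra 𝕜 A] [IsometricContinuousFunctionalCalculus 𝕜 A p]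
    {a : A} {f g : 𝕜 → 𝕜} {η : ℝ} (hη : 0 ≤ η) (hf : ContinuousOn f (spectrum 𝕜 a))
    (hg : ContinuousOn g (spectrum 𝕜 a)) (h : ∀ z ∈ spectrum 𝕜 a, ‖f z * (g z - 1)‖ ≤ η) :
    ‖cfc f a * cfc g a - cfc f a‖ ≤ η := by
  rw [← cfc_mul f g a, ← cfc_sub (fun z => f z * g z) f a (hf.mul hg) hf]
  refine norm_cfc_le hη fun z hz => ?_
  simpa [mul_sub] using h z hz

lemma IsSelfAdjoint.norm_cfc_mul_cfc_sub_cfc_le {A : Type*} [CStarAlgebra A] {a : A}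
    (ha : IsSelfAdjoint a) {h : ℝ → ℝ} {f : ℝ → ℂ} {η : ℝ} (hη : 0 ≤ η)
    (hh : ContinuousOn h (spectrum ℝ a)) (hf : ContinuousOn f (spectrum ℝ a))
    (hhf : ∀ s ∈ spectrum ℝ a, ‖h s‖ * ‖f s - 1‖ ≤ η) :
    Commute (cfc h a) (cfc (fun w : ℂ => f w.re) a) ∧
      ‖cfc h a * cfc (fun w : ℂ => f w.re) a - cfc h a‖ ≤ η := by
  have hre : MapsTo Complex.re (spectrum ℂ a) (spectrum ℝ a) :=
    fun w hw => ha.spectrumRestricts.apply_mem hw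
  rw [cfc_real_eq_complex h ha]
  refine ⟨cfc_commute_cfc _ _ a, _root_.norm_cfc_mul_cfc_sub_cfc_le hη ?_ ?_ fun w hw => ?_⟩
  · exact Complex.continuous_ofReal.comp_continuousOn
      (hh.comp Complex.continuous_re.continuousOn hre)
  · exact hf.comp Complex.continuous_re.continuousOn hre
  · simpa [norm_mul] using hhf w.re (hre hw)

lemma spectrum_subset_Icc_of_nonneg_of_norm_le_one {A : Type*} [CStarAlgebra A] [PartialOrder A]
    [StarOrderedRing A] {a : A} (ha : 0 ≤ a) (ha₁ : ‖a‖ ≤ 1) : spectrum ℝ a ⊆ Icc 0 1 :=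
  fun s hs => ⟨spectrum_nonneg_of_nonneg ha hs,
    (CFC.le_one_iff a).mp ((CStarAlgebra.norm_le_one_iff_of_nonneg a).mp ha₁) s hs⟩

noncomputable def ramp (t s : ℝ) : ℝ := max 0 ((s - t) / (1 - t))

@[fun_prop]
lemma continuous_ramp (t : ℝ) : Continuous (ramp t) := by
  unfold ramp; fun_prop

lemma ramp_nonneg (t s : ℝ) : 0 ≤ ramp t s := le_max_left _ _

lemma ramp_le_one {t s : ℝ} (ht : t < 1) (hs : s ≤ 1) : ramp t s ≤ 1 :=
  max_le zero_le_one <| (div_le_one (by linarith)).mpr (by linarith)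

lemma ramp_of_le {t s : ℝ} (ht : t < 1) (hs : s ≤ t) : ramp t s = 0 :=
  max_eq_left <| div_nonpos_of_nonpos_of_nonneg (by linarith) (by linarith)

-- For `s ≥ t` the right-hand side is the chord of `s ↦ s ^ 2` through `(t, t ^ 2)` and `(1, 1)`.
lemma mul_self_le_ramp {t s : ℝ} (ht : t ∈ Ico 0 1) (hs : s ∈ Icc 0 1) :
    s * s ≤ t ^ 2 + (1 - t ^ 2) * ramp t s := by
  obtain ⟨ht₀, ht₁⟩ := ht
  obtain ⟨hs₀, hs₁⟩ := hs
  rcases le_or_gt s t with hst | hts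
  · rw [ramp_of_le ht₁ hst, mul_zero, add_zero]
    nlinarith
  · have hramp : ramp t s = (s - t) / (1 - t) :=
      max_eq_right (div_nonneg (by linarith) (by linarith))
    rw [hramp, show (1 - t ^ 2) * ((s - t) / (1 - t)) = (1 + t) * (s - t) by
      field_simp; ring]
    nlinarith

lemma cfc_sqrt_ramp_mul_self {A : Type*} [CStarAlgebra A] (a : A) (t : ℝ) :
    cfc (fun s => √(ramp t s)) a * cfc (fun s => √(ramp t s)) a = cfc (ramp t) a := by
  rw [← cfc_mul _ _ a]
  exact cfc_congr fun s _ => Real.mul_self_sqrt (ramp_nonneg t s)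

lemma mul_self_le_cfc_ramp {A : Type*} [CStarAlgebra A] [PartialOrder A] [StarOrderedRing A]
    {a : A} (ha : 0 ≤ a) (ha₁ : ‖a‖ ≤ 1) {t : ℝ} (ht : t ∈ Ico 0 1) :
    a * a ≤ algebraMap ℝ A (t ^ 2) + (1 - t ^ 2) • cfc (ramp t) a := by
  have hsq : a * a = cfc (fun s : ℝ => s * s) a := by
    rw [cfc_mul _ _ a, cfc_id' ℝ a]
  have hrhs : algebraMap ℝ A (t ^ 2) + (1 - t ^ 2) • cfc (ramp t) a =
      cfc (fun s => t ^ 2 + (1 - t ^ 2) * ramp t s) a := by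
    rw [cfc_add a _ _, cfc_const (t ^ 2) a, cfc_const_mul _ _ a]
  rw [hsq, hrhs]
  exact cfc_mono fun s hs =>
    mul_self_le_ramp ht (spectrum_subset_Icc_of_nonneg_of_norm_le_one ha ha₁ hs)

lemma norm_sqrt_ramp_mul_le {E : Type*} [SeminormedAddCommGroup E] {g : ℝ → E} {t η s : ℝ}
    (ht : t < 1) (hη : 0 ≤ η) (hg : ∀ s ∈ Icc t 1, ‖g s‖ ≤ η) (hs : s ≤ 1) :
    ‖√(ramp t s)‖ * ‖g s‖ ≤ η := by
  rcases le_or_gt s t with hst | hts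
  · simp [ramp_of_le ht hst, hη]
  · rw [Real.norm_of_nonneg (Real.sqrt_nonneg _)]
    calc √(ramp t s) * ‖g s‖ ≤ 1 * η := by
          gcongr
          · exact Real.sqrt_le_one.mpr (ramp_le_one ht hs)
          · exact hg s ⟨hts.le, hs⟩
      _ = η := one_mul η

lemma norm_cfc_sqrt_ramp_le_one {A : Type*} [CStarAlgebra A] [PartialOrder A]
    [StarOrderedRing A] {a : A} (ha : 0 ≤ a) (ha₁ : ‖a‖ ≤ 1) {t : ℝ} (ht : t < 1) :
    ‖cfc (fun s => √(ramp t s)) a‖ ≤ 1 :=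
  norm_cfc_le zero_le_one fun s hs => by
    rw [Real.norm_of_nonneg (Real.sqrt_nonneg _)]
    exact Real.sqrt_le_one.mpr
      (ramp_le_one ht (spectrum_subset_Icc_of_nonneg_of_norm_le_one ha ha₁ hs).2)

theorem stmt8 (f : ℝ → ℂ) (hf : ContinuousOn f (Set.Icc 0 1)) (hf1 : f 1 = 1)
    (ε : ℝ) (hε : 0 < ε) :
    ∃ δ > (0 : ℝ), ∀ (A : Type) [CStarAlgebra A] [PartialOrder A] [StarOrderedRing A],
      ∀ a x : A, 0 ≤ a → 0 ≤ x → ‖a‖ ≤ 1 → ‖x‖ ≤ 1 → 1 - δ < ‖a * x * a‖ →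
        1 - ε < ‖cfc (fun w : ℂ => f w.re) a * x * cfc (fun w : ℂ => f w.re) a‖ := by
  obtain ⟨η, hη, hηε⟩ : ∃ η > 0, η * (2 + η) ≤ ε / 2 := by
    refine ⟨min 1 (ε / 6), by positivity, ?_⟩
    have : 2 + min 1 (ε / 6) ≤ 3 := by linarith [min_le_left 1 (ε / 6)]
    nlinarith [min_le_right 1 (ε / 6), (by positivity : 0 < min 1 (ε / 6))]
  obtain ⟨t, ht, hft⟩ :=
    exists_Ico_forall_dist_lt_of_continuousWithinAt one_pos (hf 1 ⟨zero_le_one, le_rfl⟩) hη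
  simp only [hf1, dist_eq_norm] at hft
  have ht₂ : 0 < 1 - t ^ 2 := by nlinarith [ht.1, ht.2]
  refine ⟨ε / 2 * (1 - t ^ 2), by positivity, fun A _ _ _ a x ha hx ha₁ hx₁ hax => ?_⟩
  have hspec := spectrum_subset_Icc_of_nonneg_of_norm_le_one ha ha₁
  set b := cfc (fun s => √(ramp t s)) a
  have hbxb : 1 - ε / 2 < ‖b * x * b‖ := by
    have hab := mul_self_le_cfc_ramp ha ha₁ ht
    rw [← cfc_sqrt_ramp_mul_self] at hab
    have hconj := norm_mul_mul_le_of_mul_self_le ha.isSelfAdjoint (cfc_predicate _ a) hx hx₁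
      (sq_nonneg t) (by linarith) hab
    have : (1 - t ^ 2) * (1 - ε / 2) < (1 - t ^ 2) * ‖b * x * b‖ := by linarith
    exact lt_of_mul_lt_mul_left this ht₂.le
  obtain ⟨hcomm, hbf⟩ := ha.isSelfAdjoint.norm_cfc_mul_cfc_sub_cfc_le hη.le
    (continuous_ramp t).sqrt.continuousOn (hf.mono hspec)
    fun s hs => norm_sqrt_ramp_mul_le ht.2 hη.le (fun s hs => (hft s hs).le) (hspec hs).2
  have hperturb :=
    hcomm.norm_mul_mul_le_of_norm_mul_sub_le (norm_cfc_sqrt_ramp_le_one ha ha₁ ht.2) hx₁ hbf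
  linarith
end

section
/- Let A be a C*-algebra and let B ⊆ A be a C*-subalgebra. Let a, b, x ∈ A satisfy: a is positive with a ≤ 1 and ‖a‖ = 1, b is positive, b a = b, x ≠ 0, x x* ∈ B, and x* x lies in the closure of b A b. Then there exists y ∈ A such that ‖y‖ = 1, y a y* ∈ B, and ‖y a y*‖ = 1. -/
/-! Since `b * a = b`, right multiplication by `a` fixes every `b * c * b`, hence by continuity
every element of the closure of `b A b`, in particular `x⋆x`. The C⋆-identity upgrades
`x⋆x a = x⋆x` to `x a = x`, so for `y = x / ‖x‖` we get `y a y⋆ = y y⋆`, a positive multiple of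
`x x⋆ ∈ B` whose norm is `‖y‖² = 1`. -/

lemma mul_eq_self_of_mem_closure {A : Type*} [Mul A] [TopologicalSpace A] [ContinuousMul A]
    [T2Space A] {S : Set A} {a z : A} (hS : ∀ s ∈ S, s * a = s) (hz : z ∈ closure S) :
    z * a = z :=
  closure_minimal (t := {z | z * a = z}) hS
    (isClosed_eq (continuous_id.mul continuous_const) continuous_id) hz

lemma mul_eq_self_of_mem_closure_sandwich {A : Type*} [Semigroup A] [TopologicalSpace A]
    [ContinuousMul A] [T2Space A] {a b z : A} (hba : b * a = b)
    (hz : z ∈ closure {z : A | ∃ c : A, z = b * c * b}) : z * a = z :=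
  mul_eq_self_of_mem_closure (by rintro _ ⟨c, rfl⟩; rw [mul_assoc, hba]) hz

lemma CStarRing.mul_eq_self_of_star_mul_self_mul_eq {A : Type*} [NonUnitalNormedRing A]
    [StarRing A] [CStarRing A] {a x : A} (h : star x * x * a = star x * x) : x * a = x := by
  have h' : star a * (star x * x) = star x * x := by
    simpa only [star_mul, star_star, mul_assoc] using congrArg star h
  have e₁ : star x * (x * a) = star x * x := by rw [← mul_assoc, h]
  have e₂ : star a * star x * x = star x * x := by rw [mul_assoc, h']
  have e₃ : star a * star x * (x * a) = star x * x := by rw [mul_assoc, e₁, h']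
  have hzero : star (x - x * a) * (x - x * a) = 0 := by
    rw [star_sub, star_mul, sub_mul, mul_sub, mul_sub, e₁, e₂, e₃, sub_self]
  exact (sub_eq_zero.mp ((CStarRing.star_mul_self_eq_zero_iff _).mp hzero)).symm

theorem stmt10_general {A : Type*} [NonUnitalCStarAlgebra A]
    (B : NonUnitalStarSubalgebra ℂ A)
    (a b x : A)
    (hba : b * a = b) (hx : x ≠ 0)
    (hxxstar : x * star x ∈ B)
    (hxstarx : star x * x ∈ closure {z : A | ∃ c : A, z = b * c * b}) :
    ∃ y : A, ‖y‖ = 1 ∧ y * a * star y ∈ B ∧ ‖y * a * star y‖ = 1 := by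
  have hxa : x * a = x := CStarRing.mul_eq_self_of_star_mul_self_mul_eq
    (mul_eq_self_of_mem_closure_sandwich hba hxstarx)
  set c : ℂ := (‖x‖ : ℂ)⁻¹
  have hy : ‖c • x‖ = 1 := norm_smul_inv_norm hx
  refine ⟨c • x, hy, ?_, ?_⟩ <;> rw [smul_mul_assoc, hxa]
  · rw [star_smul, smul_mul_smul_comm]
    exact B.smul_mem _ hxxstar
  · rw [CStarRing.norm_self_mul_star, hy, one_mul]

theorem stmt10 {A : Type*} [NonUnitalCStarAlgebra A] [PartialOrder A] [StarOrderedRing A]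
    (B : NonUnitalStarSubalgebra ℂ A) (hB : IsClosed (B : Set A))
    (a b x : A) (ha₀ : 0 ≤ a) (ha₁ : ‖a‖ ≤ 1) (hanorm : ‖a‖ = 1)
    (hb : 0 ≤ b) (hba : b * a = b) (hx : x ≠ 0)
    (hxxstar : x * star x ∈ B)
    (hxstarx : star x * x ∈ closure {z : A | ∃ c : A, z = b * c * b}) :
    ∃ y : A, ‖y‖ = 1 ∧ y * a * star y ∈ B ∧ ‖y * a * star y‖ = 1 :=
  stmt10_general B a b x hba hx hxxstar hxstarx
end
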